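/- Let k⁺ be a strike such that d1(k⁺, I) = 0 for some I > 0 (dual zero vanna condition). Then k⁺ = x + I²(T-t)/2, and H(t,T,x,k⁺,v) = [e^x N'(d1(k⁺,v)) / (2v√(T-t))] · (v² + I²)/v² for any v > 0, where H := (∂³/∂x³ - ∂²/∂x²)BS. -/

import Mathlib

open MeasureTheory Real Filter

/-- Standard normal density N'. -/
noncomputable def normPdf (z : ℝ) : ℝ := Real.exp (-z ^ 2 / 2) / Real.sqrt (2 * Real.pi)

/-- Standard normal CDF N. -/
noncomputable def normCdf (z : ℝ) : ℝ := ∫ u in Set.Iic z, normPdf u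

/-- Black-Scholes d1. -/
noncomputable def bsD1 (t T x k σ : ℝ) : ℝ :=
  (x - k) / (σ * Real.sqrt (T - t)) + σ / 2 * Real.sqrt (T - t)

/-- Black-Scholes d2. -/
noncomputable def bsD2 (t T x k σ : ℝ) : ℝ :=
  (x - k) / (σ * Real.sqrt (T - t)) - σ / 2 * Real.sqrt (T - t)

/-- Zero-rate Black-Scholes call price. -/
noncomputable def bsPrice (t T x k σ : ℝ) : ℝ :=
  Real.exp x * normCdf (bsD1 t T x k σ) - Real.exp k * normCdf (bsD2 t T x k σ)

/-- The operator H = (∂³/∂x³ - ∂²/∂x²) applied to the Black-Scholes price, as a function of x. -/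
noncomputable def bsH (t T k σ : ℝ) (x : ℝ) : ℝ :=
  iteratedDeriv 3 (fun y => bsPrice t T y k σ) x -
    iteratedDeriv 2 (fun y => bsPrice t T y k σ) x

lemma normPdf_integrable : Integrable normPdf := by
  have h : Integrable (fun z : ℝ => Real.exp (-(1/2) * z ^ 2)) := integrable_exp_neg_mul_sq (by norm_num)
  have : normPdf = fun z => Real.exp (-(1/2) * z ^ 2) * (Real.sqrt (2 * Real.pi))⁻¹ := by
    funext z; unfold normPdf; rw [div_eq_mul_inv]; ring_nf
  rw [this]
  exact h.mul_const _

lemma normPdf_continuous : Continuous normPdf := by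
  unfold normPdf
  fun_prop

lemma normCdf_hasDerivAt (z : ℝ) : HasDerivAt normCdf (normPdf z) z := by
  have key : ∀ w : ℝ, normCdf w = normCdf 0 + ∫ u in (0:ℝ)..w, normPdf u := by
    intro w
    rw [← intervalIntegral.integral_Iic_sub_Iic normPdf_integrable.integrableOn
      normPdf_integrable.integrableOn]
    simp [normCdf]
  have h : HasDerivAt (fun w => normCdf 0 + ∫ u in (0:ℝ)..w, normPdf u) (normPdf z) z := by
    apply HasDerivAt.const_add
    exact intervalIntegral.integral_hasDerivAt_right
      normPdf_integrable.intervalIntegrable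
      (normPdf_continuous.stronglyMeasurableAtFilter _ _)
      normPdf_continuous.continuousAt
  exact h.congr_of_eventuallyEq (Eventually.of_forall fun w => key w)

lemma normPdf_hasDerivAt (z : ℝ) : HasDerivAt normPdf (-z * normPdf z) z := by
  have h1 : HasDerivAt (fun z : ℝ => -z ^ 2 / 2) (-z) z := by
    have := ((hasDerivAt_pow 2 z).neg).div_const 2
    refine this.congr_deriv ?_
    norm_num
    ring
  have h2 := (h1.exp).div_const (Real.sqrt (2 * Real.pi))
  refine h2.congr_deriv ?_
  unfold normPdf
  ring

section bs

variable (t T k v : ℝ)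

lemma bsD1_eq (y : ℝ) : bsD1 t T y k v = (y - k) / (v * Real.sqrt (T - t)) + (v * Real.sqrt (T - t)) / 2 := by
  unfold bsD1; ring

lemma bsD2_eq (y : ℝ) : bsD2 t T y k v = bsD1 t T y k v - v * Real.sqrt (T - t) := by
  unfold bsD1 bsD2; ring

variable (ht : t < T) (hv : 0 < v)
include ht hv

lemma s_pos : 0 < v * Real.sqrt (T - t) :=
  mul_pos hv (Real.sqrt_pos.mpr (by linarith))

/-- e^y N'(d1) = e^k N'(d2) -/
lemma pdf_identity (y : ℝ) :
    Real.exp y * normPdf (bsD1 t T y k v) = Real.exp k * normPdf (bsD2 t T y k v) := by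
  have hs := (s_pos t T v ht hv).ne'
  set s := v * Real.sqrt (T - t)
  unfold normPdf
  rw [bsD1_eq, bsD2_eq, bsD1_eq]
  rw [mul_div_assoc', mul_div_assoc', ← Real.exp_add, ← Real.exp_add]
  congr 1
  field_simp [hv.ne', (Real.sqrt_pos.mpr (sub_pos.mpr ht)).ne']
  ring

set_option linter.unusedSectionVars false in
lemma hasDerivAt_bsD1 (y : ℝ) :
    HasDerivAt (fun y => bsD1 t T y k v) (v * Real.sqrt (T - t))⁻¹ y := by
  have : HasDerivAt (fun y => (y - k) / (v * Real.sqrt (T - t)) + (v * Real.sqrt (T - t)) / 2)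
      (1 / (v * Real.sqrt (T - t))) y :=
    (((hasDerivAt_id y).sub_const k).div_const _).add_const _
  rw [one_div] at this
  exact this.congr_of_eventuallyEq (Eventually.of_forall fun w => (bsD1_eq t T k v w))

lemma hasDerivAt_bsD2 (y : ℝ) :
    HasDerivAt (fun y => bsD2 t T y k v) (v * Real.sqrt (T - t))⁻¹ y := by
  have := ((hasDerivAt_bsD1 t T k v ht hv y).sub_const (v * Real.sqrt (T - t)))
  exact this.congr_of_eventuallyEq (Eventually.of_forall fun w => (bsD2_eq t T k v w))

/-- first derivative -/
lemma bs_deriv1 (y : ℝ) :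
    HasDerivAt (fun y => bsPrice t T y k v) (Real.exp y * normCdf (bsD1 t T y k v)) y := by
  have hs := (s_pos t T v ht hv).ne'
  have hN1 : HasDerivAt (fun y => normCdf (bsD1 t T y k v))
      (normPdf (bsD1 t T y k v) * (v * Real.sqrt (T - t))⁻¹) y :=
    (normCdf_hasDerivAt _).comp y (hasDerivAt_bsD1 t T k v ht hv y)
  have hN2 : HasDerivAt (fun y => normCdf (bsD2 t T y k v))
      (normPdf (bsD2 t T y k v) * (v * Real.sqrt (T - t))⁻¹) y :=
    (normCdf_hasDerivAt _).comp y (hasDerivAt_bsD2 t T k v ht hv y)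
  have h := ((Real.hasDerivAt_exp y).mul hN1).sub (hN2.const_mul (Real.exp k))
  have heq : Real.exp y * (normPdf (bsD1 t T y k v) * (v * Real.sqrt (T - t))⁻¹) -
      Real.exp k * (normPdf (bsD2 t T y k v) * (v * Real.sqrt (T - t))⁻¹) = 0 := by
    rw [← mul_assoc, ← mul_assoc, pdf_identity t T k v ht hv y]
    ring
  have h' : HasDerivAt (fun y => bsPrice t T y k v)
      (Real.exp y * normCdf (bsD1 t T y k v) + Real.exp y *
        (normPdf (bsD1 t T y k v) * (v * Real.sqrt (T - t))⁻¹) -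
        Real.exp k * (normPdf (bsD2 t T y k v) * (v * Real.sqrt (T - t))⁻¹)) y := by
    exact h.congr_of_eventuallyEq (Eventually.of_forall fun w => rfl)
  convert h' using 1
  rw [add_sub_assoc, heq]
  ring

/-- second derivative -/
lemma bs_deriv2 (y : ℝ) :
    HasDerivAt (fun y => Real.exp y * normCdf (bsD1 t T y k v))
      (Real.exp y * normCdf (bsD1 t T y k v) +
        Real.exp y * normPdf (bsD1 t T y k v) * (v * Real.sqrt (T - t))⁻¹) y := by
  have hN1 : HasDerivAt (fun y => normCdf (bsD1 t T y k v))
      (normPdf (bsD1 t T y k v) * (v * Real.sqrt (T - t))⁻¹) y :=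
    (normCdf_hasDerivAt _).comp y (hasDerivAt_bsD1 t T k v ht hv y)
  have h := (Real.hasDerivAt_exp y).mul hN1
  refine h.congr_deriv ?_
  ring

/-- third derivative -/
lemma bs_deriv3 (y : ℝ) :
    HasDerivAt (fun y => Real.exp y * normCdf (bsD1 t T y k v) +
        Real.exp y * normPdf (bsD1 t T y k v) * (v * Real.sqrt (T - t))⁻¹)
      (Real.exp y * normCdf (bsD1 t T y k v) +
        Real.exp y * normPdf (bsD1 t T y k v) * (v * Real.sqrt (T - t))⁻¹ +
        (Real.exp y * normPdf (bsD1 t T y k v) * (v * Real.sqrt (T - t))⁻¹ +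
          Real.exp y * (-(bsD1 t T y k v)) * normPdf (bsD1 t T y k v) *
            ((v * Real.sqrt (T - t))⁻¹) ^ 2)) y := by
  have hN1 : HasDerivAt (fun y => normCdf (bsD1 t T y k v))
      (normPdf (bsD1 t T y k v) * (v * Real.sqrt (T - t))⁻¹) y :=
    (normCdf_hasDerivAt _).comp y (hasDerivAt_bsD1 t T k v ht hv y)
  have hP1 : HasDerivAt (fun y => normPdf (bsD1 t T y k v))
      ((-(bsD1 t T y k v) * normPdf (bsD1 t T y k v)) * (v * Real.sqrt (T - t))⁻¹) y :=
    (normPdf_hasDerivAt _).comp y (hasDerivAt_bsD1 t T k v ht hv y)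
  have h := ((Real.hasDerivAt_exp y).mul hN1).add
    (((Real.hasDerivAt_exp y).mul hP1).mul_const ((v * Real.sqrt (T - t))⁻¹))
  refine h.congr_deriv ?_
  ring

lemma bsH_eq :
    ∀ x, bsH t T k v x = Real.exp x * normPdf (bsD1 t T x k v) * (v * Real.sqrt (T - t))⁻¹ +
      Real.exp x * (-(bsD1 t T x k v)) * normPdf (bsD1 t T x k v) *
        ((v * Real.sqrt (T - t))⁻¹) ^ 2 := by
  intro x
  have hd1 : deriv (fun y => bsPrice t T y k v) =
      fun y => Real.exp y * normCdf (bsD1 t T y k v) :=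
    funext fun y => (bs_deriv1 t T k v ht hv y).deriv
  have hd2 : deriv (fun y => Real.exp y * normCdf (bsD1 t T y k v)) =
      fun y => Real.exp y * normCdf (bsD1 t T y k v) +
        Real.exp y * normPdf (bsD1 t T y k v) * (v * Real.sqrt (T - t))⁻¹ :=
    funext fun y => (bs_deriv2 t T k v ht hv y).deriv
  have h2 : iteratedDeriv 2 (fun y => bsPrice t T y k v) x =
      Real.exp x * normCdf (bsD1 t T x k v) +
        Real.exp x * normPdf (bsD1 t T x k v) * (v * Real.sqrt (T - t))⁻¹ := by
    rw [show (2:ℕ) = 1 + 1 from rfl, iteratedDeriv_succ, iteratedDeriv_one, hd1, hd2]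
  have h3 : iteratedDeriv 3 (fun y => bsPrice t T y k v) x =
      Real.exp x * normCdf (bsD1 t T x k v) +
        Real.exp x * normPdf (bsD1 t T x k v) * (v * Real.sqrt (T - t))⁻¹ +
        (Real.exp x * normPdf (bsD1 t T x k v) * (v * Real.sqrt (T - t))⁻¹ +
          Real.exp x * (-(bsD1 t T x k v)) * normPdf (bsD1 t T x k v) *
            ((v * Real.sqrt (T - t))⁻¹) ^ 2) := by
    rw [show (3:ℕ) = 2 + 1 from rfl, iteratedDeriv_succ]
    have : iteratedDeriv 2 (fun y => bsPrice t T y k v) =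
        fun y => Real.exp y * normCdf (bsD1 t T y k v) +
          Real.exp y * normPdf (bsD1 t T y k v) * (v * Real.sqrt (T - t))⁻¹ := by
      funext y
      rw [show (2:ℕ) = 1 + 1 from rfl, iteratedDeriv_succ, iteratedDeriv_one, hd1, hd2]
    rw [this, (bs_deriv3 t T k v ht hv x).deriv]
  unfold bsH
  rw [h2, h3]
  ring

end bs

/-- At the dual zero vanna strike k⁺ (d1(k⁺,I)=0): k⁺ = x + I²(T-t)/2 and
H(t,T,x,k⁺,v) = [eˣ N'(d1(k⁺,v))/(2v√(T-t))] (v² + I²)/v². -/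
theorem bs_H_dual_zero_vanna (t T x k I v : ℝ) (ht : t < T) (hI : 0 < I) (hv : 0 < v)
    (hk : bsD1 t T x k I = 0) :
    k = x + I ^ 2 * (T - t) / 2 ∧
    bsH t T k v x
      = Real.exp x * normPdf (bsD1 t T x k v) / (2 * v * Real.sqrt (T - t)) *
          ((v ^ 2 + I ^ 2) / v ^ 2) := by
  have hτ : (0:ℝ) < T - t := by linarith
  have hsq : Real.sqrt (T - t) ^ 2 = T - t := Real.sq_sqrt hτ.le
  have hs : Real.sqrt (T - t) ≠ 0 := (Real.sqrt_pos.mpr hτ).ne'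
  set u := Real.sqrt (T - t) with hu
  have hu0 : u ≠ 0 := hs
  have hk' : k = x + I ^ 2 * (T - t) / 2 := by
    unfold bsD1 at hk
    rw [← hsq]
    field_simp at hk
    nlinarith [hk]
  refine ⟨hk', ?_⟩
  have hd1 : bsD1 t T x k v = u * (v ^ 2 - I ^ 2) / (2 * v) := by
    rw [bsD1_eq, hk', ← hsq]
    field_simp
    rw [Real.sqrt_sq (by rw [hu]; exact Real.sqrt_nonneg _)]
    ring
  rw [bsH_eq t T k v ht hv x, hd1]
  field_simp
  ring
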